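/- For integers N ≥ 4, define H(N) = −((N−3)/(2(N−2)))·log₂(N−3) + 1 + log₂(N−2), which is the Shannon entropy of the probability vector (w₁, w₂, …, w₂) of length N with w₁ = (N−3)/(2(N−2)) and w₂ = (1 − w₁)/(N−1). Then H(N) is a monotone increasing function of N with minimum value H(4) = 2. -/

import Mathlib

noncomputable section

/-- `−p·log₂ p`, one term of the Shannon entropy (equals `0` at `p = 0`). -/
def nmlb (p : ℝ) : ℝ := -(p * Real.logb 2 p)

/-- `H(N) = −((N−3)/(2(N−2)))·log₂(N−3) + 1 + log₂(N−2)`. -/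
def HN (N : ℕ) : ℝ :=
  -(((N : ℝ) - 3) / (2 * ((N : ℝ) - 2))) * Real.logb 2 ((N : ℝ) - 3)
    + 1 + Real.logb 2 ((N : ℝ) - 2)

def fHN (x : ℝ) : ℝ :=
  -((x - 3) / (2 * (x - 2))) * Real.logb 2 (x - 3) + 1 + Real.logb 2 (x - 2)

lemma fHN_hasDerivAt (x : ℝ) (hx : 3 < x) :
    HasDerivAt fHN ((1/(2*(x-2)) - Real.log (x-3)/(2*(x-2)^2))/Real.log 2) x := by
  have h3 : x - 3 > 0 := by linarith
  have h2 : x - 2 > 0 := by linarith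
  have h3' : x - 3 ≠ 0 := ne_of_gt h3
  have h2' : x - 2 ≠ 0 := ne_of_gt h2
  have h22 : (2:ℝ) * (x - 2) ≠ 0 := by positivity
  have hl2 : Real.log 2 ≠ 0 := ne_of_gt (Real.log_pos (by norm_num))
  have heq : fHN = fun x : ℝ =>
      -((x - 3) / (2 * (x - 2))) * (Real.log (x - 3) * (Real.log 2)⁻¹) + 1
        + Real.log (x - 2) * (Real.log 2)⁻¹ := by
    funext y
    simp [fHN, Real.logb, div_eq_mul_inv]
  rw [heq]
  have hu : HasDerivAt (fun x : ℝ => x - 3) 1 x := (hasDerivAt_id x).sub_const 3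
  have hv : HasDerivAt (fun x : ℝ => 2 * (x - 2)) 2 x := by
    simpa using ((hasDerivAt_id x).sub_const 2).const_mul 2
  have hq : HasDerivAt (fun x : ℝ => (x - 3) / (2 * (x - 2)))
      ((1 * (2 * (x - 2)) - (x - 3) * 2) / (2 * (x - 2))^2) x := hu.div hv h22
  have hl3 : HasDerivAt (fun x : ℝ => Real.log (x - 3)) (1 / (x - 3)) x := by
    simpa using hu.log h3'
  have hl2' : HasDerivAt (fun x : ℝ => Real.log (x - 2)) (1 / (x - 2)) x := by
    simpa using (((hasDerivAt_id x).sub_const 2)).log h2'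
  have h := ((((hq.neg.mul (hl3.mul_const (Real.log 2)⁻¹)).add_const 1).add
      (hl2'.mul_const (Real.log 2)⁻¹)))
  refine h.congr_deriv ?_
  simp only [Pi.neg_apply]
  field_simp
  ring

lemma fHN_mono : StrictMonoOn fHN (Set.Ici (4:ℝ)) := by
  apply strictMonoOn_of_deriv_pos (convex_Ici 4)
  · intro x hx
    have hx4 : (4:ℝ) ≤ x := hx
    exact (fHN_hasDerivAt x (by linarith)).continuousAt.continuousWithinAt
  · intro x hx
    rw [interior_Ici] at hx
    have hx4 : (4:ℝ) < x := hx
    rw [(fHN_hasDerivAt x (by linarith)).deriv]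
    have h2 : x - 2 > 0 := by linarith
    have hlog : Real.log (x - 3) < x - 2 := by
      have := Real.log_le_sub_one_of_pos (show (0:ℝ) < x - 3 by linarith)
      linarith
    have hnum : 1/(2*(x-2)) - Real.log (x-3)/(2*(x-2)^2) > 0 := by
      have heq : 1/(2*(x-2)) - Real.log (x-3)/(2*(x-2)^2)
          = (x - 2 - Real.log (x-3))/(2*(x-2)^2) := by
        field_simp
      rw [heq]
      exact div_pos (by linarith) (by positivity)
    exact div_pos hnum (Real.log_pos (by norm_num))

/-- For `N ≥ 4`, `H(N)` equals the Shannon entropy of the probability vector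
`(w₁, w₂, …, w₂)` of length `N` with `w₁ = (N−3)/(2(N−2))` and `w₂ = (1−w₁)/(N−1)`;
moreover `H(N)` is a monotone increasing function of `N` with minimum value `H(4) = 2`. -/
theorem HN_entropy_monotone_min :
    (∀ N : ℕ, 4 ≤ N →
      HN N = nmlb (((N : ℝ) - 3) / (2 * ((N : ℝ) - 2)))
        + ((N : ℝ) - 1) * nmlb ((1 - ((N : ℝ) - 3) / (2 * ((N : ℝ) - 2))) / ((N : ℝ) - 1)))
    ∧ (∀ M N : ℕ, 4 ≤ M → M < N → HN M < HN N)
    ∧ HN 4 = 2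
    ∧ (∀ N : ℕ, 4 ≤ N → 2 ≤ HN N) := by
  have hmono : ∀ M N : ℕ, 4 ≤ M → M < N → HN M < HN N := by
    intro M N hM hMN
    have hM' : (4:ℝ) ≤ (M:ℝ) := by exact_mod_cast hM
    have hN' : (4:ℝ) ≤ (N:ℝ) := by
      have : 4 ≤ N := le_of_lt (lt_of_le_of_lt hM hMN)
      exact_mod_cast this
    have := fHN_mono hM' hN' (by exact_mod_cast hMN)
    simpa [fHN, HN] using this
  have h4 : HN 4 = 2 := by
    rw [HN, show ((4:ℕ):ℝ) - 3 = 1 by norm_num, show ((4:ℕ):ℝ) - 2 = 2 by norm_num,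
      Real.logb_self_eq_one (by norm_num), Real.logb_one]
    ring
  refine ⟨?_, hmono, h4, ?_⟩
  · intro N hN
    have ha : (4:ℝ) ≤ (N:ℝ) := by exact_mod_cast hN
    set a : ℝ := (N:ℝ) with ha'
    have h3 : a - 3 > 0 := by linarith
    have h2 : a - 2 > 0 := by linarith
    have h1 : a - 1 > 0 := by linarith
    have h3' : a - 3 ≠ 0 := ne_of_gt h3
    have h2' : a - 2 ≠ 0 := ne_of_gt h2
    have h1' : a - 1 ≠ 0 := ne_of_gt h1
    have h22 : (2:ℝ) * (a - 2) > 0 := by positivity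
    have hw2 : (1 - (a - 3) / (2 * (a - 2))) / (a - 1) = 1 / (2 * (a - 2)) := by
      field_simp
      ring
    rw [hw2]
    unfold nmlb HN
    rw [← ha']
    have hd : Real.logb 2 ((a - 3) / (2 * (a - 2))) =
        Real.logb 2 (a - 3) - Real.logb 2 (2 * (a - 2)) :=
      Real.logb_div h3' (ne_of_gt h22)
    have hinv : Real.logb 2 (1 / (2 * (a - 2))) = -Real.logb 2 (2 * (a - 2)) := by
      rw [one_div, Real.logb_inv]
    have hm : Real.logb 2 (2 * (a - 2)) = 1 + Real.logb 2 (a - 2) := by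
      rw [Real.logb_mul (by norm_num) h2', Real.logb_self_eq_one (by norm_num)]
    rw [hd, hinv, hm]
    field_simp
    ring
  · intro N hN
    rcases eq_or_lt_of_le hN with h | h
    · rw [← h, h4]
    · have := hmono 4 N le_rfl h
      rw [h4] at this
      linarith
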